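/- arXiv:2110.14260 — 3 statements merged into one kernel-verified Lean document; each statement's English description precedes it below -/
import Mathlib

section
/- Let σ(t) = (1/4) t² − C₀ t^s − (μ/q) C t^q with constants C₀, C > 0, 1 ≤ q < 2 < s, μ > 0. If T₀ and T₁ are positive zeros of σ with σ'(T₀) > 0 > σ'(T₁), then T₀ ≤ ((2−q)/(4 C₀ (s−q)))^{1/(s−2)} ≤ T₁. -/
lemma key_id (C₀ C μ q s T : ℝ) (hq : 0 < q) (hT : 0 < T)
    (hσ : T ^ 2 / 4 - C₀ * T ^ s - μ * C / q * T ^ q = 0) :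
    T * (T / 2 - s * C₀ * T ^ (s - 1) - μ * C * T ^ (q - 1)) =
      (2 - q) * T ^ 2 / 4 - (s - q) * (C₀ * T ^ s) := by
  have hs1 : T ^ (s - 1) = T ^ s / T := by
    rw [Real.rpow_sub hT, Real.rpow_one]
  have hq1 : T ^ (q - 1) = T ^ q / T := by
    rw [Real.rpow_sub hT, Real.rpow_one]
  have hμq : μ * C * T ^ q = q * (T ^ 2 / 4 - C₀ * T ^ s) := by
    have h : μ * C / q * T ^ q = T ^ 2 / 4 - C₀ * T ^ s := by linarith
    field_simp at h
    nlinarith [h]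
  rw [hs1, hq1]
  field_simp
  nlinarith [hμq]

theorem stmt_4 (C₀ C μ q s T₀ T₁ : ℝ)
    (hC₀ : C₀ > 0) (hC : C > 0) (hμ : μ > 0) (hq : 1 ≤ q) (hq2 : q < 2) (hs : s > 2)
    (hT₀ : T₀ > 0) (hT₁ : T₁ > 0)
    (hσ₀ : T₀ ^ 2 / 4 - C₀ * T₀ ^ s - μ * C / q * T₀ ^ q = 0)
    (hσ₁ : T₁ ^ 2 / 4 - C₀ * T₁ ^ s - μ * C / q * T₁ ^ q = 0)
    (hσ'₀ : T₀ / 2 - s * C₀ * T₀ ^ (s - 1) - μ * C * T₀ ^ (q - 1) > 0)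
    (hσ'₁ : T₁ / 2 - s * C₀ * T₁ ^ (s - 1) - μ * C * T₁ ^ (q - 1) < 0) :
    T₀ ≤ ((2 - q) / (4 * C₀ * (s - q))) ^ (1 / (s - 2)) ∧
    ((2 - q) / (4 * C₀ * (s - q))) ^ (1 / (s - 2)) ≤ T₁ := by
  have hq0 : (0:ℝ) < q := by linarith
  have hsq : 0 < s - q := by linarith
  have hs2 : 0 < s - 2 := by linarith
  have hA : 0 < (2 - q) / (4 * C₀ * (s - q)) := by
    apply div_pos (by linarith) (by positivity)
  set A : ℝ := (2 - q) / (4 * C₀ * (s - q)) with hAdef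
  have hexp : 0 < 1 / (s - 2) := by positivity
  -- T₀ part
  have h0 : 0 < (2 - q) * T₀ ^ 2 / 4 - (s - q) * (C₀ * T₀ ^ s) := by
    rw [← key_id C₀ C μ q s T₀ hq0 hT₀ hσ₀]
    exact mul_pos hT₀ hσ'₀
  have h1 : 0 > (2 - q) * T₁ ^ 2 / 4 - (s - q) * (C₀ * T₁ ^ s) := by
    rw [← key_id C₀ C μ q s T₁ hq0 hT₁ hσ₁]
    exact mul_neg_of_pos_of_neg hT₁ hσ'₁
  have hsplit : ∀ T : ℝ, 0 < T → T ^ s = T ^ 2 * T ^ (s - 2) := by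
    intro T hT
    rw [← Real.rpow_natCast T 2, ← Real.rpow_add hT]
    norm_num
  have h0' : T₀ ^ (s - 2) < A := by
    rw [hAdef, lt_div_iff₀ (by positivity)]
    rw [hsplit T₀ hT₀] at h0
    have hT2 : 0 < T₀ ^ 2 := by positivity
    nlinarith [h0, hT2]
  have h1' : A < T₁ ^ (s - 2) := by
    rw [hAdef, div_lt_iff₀ (by positivity)]
    rw [hsplit T₁ hT₁] at h1
    have hT2 : 0 < T₁ ^ 2 := by positivity
    nlinarith [h1, hT2]
  constructor
  · have : T₀ = (T₀ ^ (s - 2)) ^ (1 / (s - 2)) := by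
      rw [← Real.rpow_mul hT₀.le, mul_one_div, div_self hs2.ne', Real.rpow_one]
    rw [this]
    exact Real.rpow_le_rpow (by positivity) h0'.le hexp.le
  · have : T₁ = (T₁ ^ (s - 2)) ^ (1 / (s - 2)) := by
      rw [← Real.rpow_mul hT₁.le, mul_one_div, div_self hs2.ne', Real.rpow_one]
    rw [this]
    exact Real.rpow_le_rpow hA.le h1'.le hexp.le
end

section
/- Moser sequence L² decay: with w̄_n as in the Moser sequence (r₀ ∈ (0,1], n ≥ 2), one has ∫_{ℝ²} w̄_n² dx = (r₀²/(4 log n))(1 − (2 log²n + 2 log n + 1)/n²) + r₀² log n/(2 n²), and hence ∫_{ℝ²} w̄_n² dx → 0 as n → ∞. -/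
open MeasureTheory Real Filter

/-!
The function `moserFn r₀ n` is radial, so its squared `L²` norm is `2π ∫₀^∞ r F(r)² dr` for its
profile `F`. The plateau `r ≤ r₀ / n` contributes `r₀² log n / (2 n²)`; on the annulus
`r₀ / n < r ≤ r₀` the integrand `r log² (r₀ / r)` has the antiderivative
`(r² / 4) (2 log² (r₀ / r) + 2 log (r₀ / r) + 1)`, which gives the first term.
The closed form is `O(1 / log n)`.
-/

/-- The truncated-logarithm Moser function on the plane. -/
noncomputable def moserFn (r₀ : ℝ) (n : ℕ) (x : EuclideanSpace ℝ (Fin 2)) : ℝ :=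
  if ‖x‖ ≤ r₀ / n then Real.sqrt (Real.log n) / Real.sqrt (2 * π)
  else if ‖x‖ ≤ r₀ then Real.log (r₀ / ‖x‖) / (Real.sqrt (2 * π) * Real.sqrt (Real.log n))
  else 0

open Set Topology

theorem integral_fun_norm_euclideanSpace_two (f : ℝ → ℝ) :
    ∫ x : EuclideanSpace ℝ (Fin 2), f ‖x‖ = 2 * π * ∫ r in Ioi (0 : ℝ), r * f r := by
  have hball : volume.real (Metric.ball (0 : EuclideanSpace ℝ (Fin 2)) 1) = π := by
    simp [measureReal_def, EuclideanSpace.volume_ball, pi_nonneg, one_add_one_eq_two]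
  rw [integral_fun_norm_addHaar volume f, hball]
  simp [finrank_euclideanSpace, smul_eq_mul, mul_assoc]

theorem hasDerivAt_log_div {b y : ℝ} (hb : b ≠ 0) (hy : y ≠ 0) :
    HasDerivAt (fun r => log (b / r)) (-y⁻¹) y := by
  have h := ((hasDerivAt_inv hy).const_mul b).log (mul_ne_zero hb (inv_ne_zero hy))
  convert h using 1
  · simp only [div_eq_mul_inv]
  · field_simp

theorem continuousOn_log_const_div {b : ℝ} (hb : b ≠ 0) :
    ContinuousOn (fun r => log (b / r)) {0}ᶜ :=
  (continuousOn_const.div continuousOn_id fun _ hr => hr).log fun _ hr => div_ne_zero hb hr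

theorem integral_mul_log_div_sq {a b : ℝ} (ha : 0 < a) (hab : a ≤ b) :
    ∫ r in a..b, r * log (b / r) ^ 2 =
      b ^ 2 / 4 - a ^ 2 / 4 * (2 * log (b / a) ^ 2 + 2 * log (b / a) + 1) := by
  have hpos : ∀ r ∈ uIcc a b, 0 < r := fun r hr => ha.trans_le (uIcc_of_le hab ▸ hr).1
  have hderiv : ∀ r ∈ uIcc a b, HasDerivAt
      (fun r => r ^ 2 / 4 * (2 * log (b / r) ^ 2 + 2 * log (b / r) + 1))
      (r * log (b / r) ^ 2) r := by
    intro r hr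
    have hL := hasDerivAt_log_div (ha.trans_le hab).ne' (hpos r hr).ne'
    refine (((hasDerivAt_pow 2 r).div_const 4).mul
      ((((hL.pow 2).const_mul 2).add (hL.const_mul 2)).add_const 1)).congr_deriv ?_
    simp only [Pi.add_apply, Pi.pow_apply]
    field_simp [(hpos r hr).ne']
    ring
  have hcont : ContinuousOn (fun r => r * log (b / r) ^ 2) (uIcc a b) :=
    continuousOn_id.mul <| ((continuousOn_log_const_div (ha.trans_le hab).ne').pow 2).mono
      fun r hr => (hpos r hr).ne'
  rw [intervalIntegral.integral_eq_sub_of_hasDerivAt hderiv hcont.intervalIntegrable,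
    div_self (ha.trans_le hab).ne', log_one]
  ring

theorem integral_Ioi_mul_eq_of_piecewise {F g : ℝ → ℝ} {a b c : ℝ} (ha : 0 ≤ a) (hab : a ≤ b)
    (hg : IntervalIntegrable (fun r => r * g r) volume a b)
    (hF₁ : ∀ r ∈ Ioc 0 a, F r = c) (hF₂ : ∀ r ∈ Ioc a b, F r = g r)
    (hF₃ : ∀ r, b < r → F r = 0) :
    ∫ r in Ioi 0, r * F r = c * a ^ 2 / 2 + ∫ r in a..b, r * g r := by
  have hinner : EqOn (fun r => r * F r) (fun r => r * c) (uIoc 0 a) := fun r hr => by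
    rw [uIoc_of_le ha] at hr
    simp only [hF₁ r hr]
  have houter : EqOn (fun r => r * F r) (fun r => r * g r) (uIoc a b) := fun r hr => by
    rw [uIoc_of_le hab] at hr
    simp only [hF₂ r hr]
  have htail : ∀ r ∈ Ioi 0 \ Ioc 0 b, r * F r = 0 := fun r hr => by
    simp only [Set.mem_sdiff, mem_Ioi, mem_Ioc, not_and, not_le] at hr
    rw [hF₃ r (hr.2 hr.1), mul_zero]
  have hinner_int : IntervalIntegrable (fun r => r * F r) volume 0 a :=
    (intervalIntegrable_congr hinner).2 <| (continuous_mul_const c).intervalIntegrable _ _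
  rw [setIntegral_eq_of_subset_of_forall_sdiff_eq_zero measurableSet_Ioi Ioc_subset_Ioi_self htail,
    ← intervalIntegral.integral_of_le (ha.trans hab),
    ← intervalIntegral.integral_add_adjacent_intervals hinner_int
      ((intervalIntegrable_congr houter).2 hg),
    intervalIntegral.integral_congr_ae (Eventually.of_forall hinner),
    intervalIntegral.integral_congr_ae (Eventually.of_forall houter),
    intervalIntegral.integral_mul_const, integral_id]
  ring

theorem integral_moserFn_sq {r₀ : ℝ} (hr₀ : 0 < r₀) {n : ℕ} (hn : 2 ≤ n) :
    ∫ x, (moserFn r₀ n x) ^ 2 =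
      r₀ ^ 2 / (4 * log n) * (1 - (2 * (log n) ^ 2 + 2 * log n + 1) / (n : ℝ) ^ 2) +
        r₀ ^ 2 * log n / (2 * (n : ℝ) ^ 2) := by
  have hn₁ : (1 : ℝ) < n := by exact_mod_cast hn
  have hn₀ : (0 : ℝ) < n := one_pos.trans hn₁
  have hL : 0 < log n := log_pos hn₁
  have hπ : 0 < 2 * π := by positivity
  have ha : 0 < r₀ / n := div_pos hr₀ hn₀
  have hab : r₀ / n ≤ r₀ := div_le_self hr₀.le hn₁.le
  set g : ℝ → ℝ := fun r => log (r₀ / r) ^ 2 / (2 * π * log n)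
  have hg : IntervalIntegrable (fun r => r * g r) volume (r₀ / n) r₀ := by
    refine ContinuousOn.intervalIntegrable <| continuousOn_id.mul <|
      (((continuousOn_log_const_div hr₀.ne').pow 2).div_const _).mono fun r hr => ?_
    exact (ha.trans_le (uIcc_of_le hab ▸ hr).1).ne'
  set F : ℝ → ℝ := fun r => (if r ≤ r₀ / n then √(log n) / √(2 * π)
      else if r ≤ r₀ then log (r₀ / r) / (√(2 * π) * √(log n)) else 0) ^ 2
  have hF : ∫ x, (moserFn r₀ n x) ^ 2 = ∫ x : EuclideanSpace ℝ (Fin 2), F ‖x‖ := rfl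
  rw [hF, integral_fun_norm_euclideanSpace_two,
    integral_Ioi_mul_eq_of_piecewise (c := log n / (2 * π)) ha.le hab hg]
  · have hlog : log (r₀ / (r₀ / n)) = log n := by rw [div_div_cancel₀ hr₀.ne']
    simp only [g, ← mul_div_assoc, intervalIntegral.integral_div, integral_mul_log_div_sq ha hab,
      hlog]
    field_simp
    ring
  · intro r hr
    simp only [F, if_pos hr.2, div_pow, sq_sqrt hL.le, sq_sqrt hπ.le]
  · intro r hr
    simp only [F, g, if_neg (not_le.2 hr.1), if_pos hr.2, div_pow, mul_pow, sq_sqrt hL.le,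
      sq_sqrt hπ.le]
  · intro r hr
    simp only [F, if_neg (not_le.2 (hab.trans_lt hr)), if_neg (not_le.2 hr), zero_pow two_ne_zero]

theorem tendsto_moserClosedForm (c : ℝ) :
    Tendsto (fun x : ℝ => c / (4 * log x) * (1 - (2 * log x ^ 2 + 2 * log x + 1) / x ^ 2) +
      c * log x / (2 * x ^ 2)) atTop (𝓝 0) := by
  have hlog_div : Tendsto (fun x => log x / x) atTop (𝓝 0) :=
    isLittleO_log_id_atTop.tendsto_div_nhds_zero
  have hinv : Tendsto (fun x : ℝ => x⁻¹) atTop (𝓝 0) := tendsto_inv_atTop_zero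
  have hlog_inv : Tendsto (fun x => (log x)⁻¹) atTop (𝓝 0) :=
    tendsto_log_atTop.inv_tendsto_atTop
  have hlim := ((hlog_inv.const_mul (c / 4)).mul (tendsto_const_nhds (x := (1 : ℝ)).sub
    ((((hlog_div.pow 2).const_mul 2).add ((hlog_div.mul hinv).const_mul 2)).add (hinv.pow 2)))).add
    ((hlog_div.const_mul (c / 2)).mul hinv)
  simp only [mul_zero, zero_mul, add_zero] at hlim
  refine hlim.congr' ?_
  filter_upwards [eventually_gt_atTop 1] with x hx
  have hL : log x ≠ 0 := (log_pos hx).ne'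
  field_simp

theorem stmt_13_general (r₀ : ℝ) (hr₀ : 0 < r₀) :
    (∀ n : ℕ, 2 ≤ n →
      ∫ x, (moserFn r₀ n x) ^ 2 =
        r₀ ^ 2 / (4 * Real.log n) *
            (1 - (2 * (Real.log n) ^ 2 + 2 * Real.log n + 1) / (n : ℝ) ^ 2) +
          r₀ ^ 2 * Real.log n / (2 * (n : ℝ) ^ 2)) ∧
    Tendsto (fun n : ℕ => ∫ x, (moserFn r₀ n x) ^ 2) atTop (nhds 0) := by
  refine ⟨fun n hn => integral_moserFn_sq hr₀ hn, ?_⟩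
  refine ((tendsto_moserClosedForm (r₀ ^ 2)).comp tendsto_natCast_atTop_atTop).congr' ?_
  filter_upwards [eventually_ge_atTop 2] with n hn
  exact (integral_moserFn_sq hr₀ hn).symm

theorem stmt_13 (r₀ : ℝ) (hr₀ : 0 < r₀) (hr₀' : r₀ ≤ 1) :
    (∀ n : ℕ, 2 ≤ n →
      ∫ x, (moserFn r₀ n x) ^ 2 =
        r₀ ^ 2 / (4 * Real.log n) *
            (1 - (2 * (Real.log n) ^ 2 + 2 * Real.log n + 1) / (n : ℝ) ^ 2) +
          r₀ ^ 2 * Real.log n / (2 * (n : ℝ) ^ 2)) ∧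
    Tendsto (fun n : ℕ => ∫ x, (moserFn r₀ n x) ^ 2) atTop (nhds 0) :=
  stmt_13_general r₀ hr₀
end

section
/- Weighted potential bound for the Moser sequence: if V(r) ≤ M₁ r^{a₀} for r ∈ (0,1] with a₀ > −2 and M₁ > 0, then ∫_{ℝ²} V(|x|) w̄_n² dx ≤ δ_n where δ_n = M₁ r₀^{a₀+2} (log n)/((a₀+2) n^{a₀+2}) + (M₁/log n) ∫_{r₀/n}^{r₀} log²(r₀/r) r^{a₀+1} dr, and δ_n log n → 2 M₁ r₀^{a₀+2}/(a₀+2)³ as n → ∞. -/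
open MeasureTheory Real Filter

/-- The quantity `δ_n` from the potential estimate. -/
noncomputable def moserDelta (M₁ a₀ r₀ : ℝ) (n : ℕ) : ℝ :=
  M₁ * r₀ ^ (a₀ + 2) * Real.log n / ((a₀ + 2) * (n : ℝ) ^ (a₀ + 2)) +
    M₁ / Real.log n *
      ∫ r in (r₀ / n)..r₀, (Real.log (r₀ / r)) ^ 2 * r ^ (a₀ + 1)

open Set

theorem integral_le_of_ae_le_of_nonneg {α : Type*} [MeasurableSpace α] {μ : Measure α}
    {f g : α → ℝ} (hg : Integrable g μ) (hg₀ : 0 ≤ᵐ[μ] g) (hfg : f ≤ᵐ[μ] g) :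
    ∫ x, f x ∂μ ≤ ∫ x, g x ∂μ := by
  by_cases hf : Integrable f μ
  · exact integral_mono_ae hf hg hfg
  · rw [integral_undef hf]
    exact integral_nonneg_of_ae hg₀

theorem integrable_fun_norm_iff_integrableOn_mul {f : ℝ → ℝ} :
    Integrable (fun x : EuclideanSpace ℝ (Fin 2) => f ‖x‖) ↔
      IntegrableOn (fun y => y * f y) (Ioi 0) := by
  simp [integrable_fun_norm_addHaar volume (f := f)]

theorem integral_fun_norm_eq_two_pi_mul (f : ℝ → ℝ) :
    ∫ x : EuclideanSpace ℝ (Fin 2), f ‖x‖ = 2 * π * ∫ y in Ioi (0 : ℝ), y * f y := by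
  rw [integral_fun_norm_addHaar volume f]
  simp [measureReal_def, EuclideanSpace.volume_ball_fin_two, Real.pi_nonneg]
  ring

theorem hasDerivAt_log_div_sq_rpow_antideriv {r₀ a r : ℝ} (hr₀ : r₀ ≠ 0) (ha : a + 2 ≠ 0)
    (hr : r ≠ 0) :
    HasDerivAt
      (fun r => r ^ (a + 2) *
        ((a + 2) ^ 2 * Real.log (r₀ / r) ^ 2 + 2 * (a + 2) * Real.log (r₀ / r) + 2) / (a + 2) ^ 3)
      (Real.log (r₀ / r) ^ 2 * r ^ (a + 1)) r := by
  have hlog : HasDerivAt (fun r => Real.log (r₀ / r)) (-r⁻¹) r := by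
    refine (((hasDerivAt_inv hr).const_mul r₀).log (div_ne_zero hr₀ hr)).congr_deriv ?_
    field_simp
  have hpow : HasDerivAt (fun r => r ^ (a + 2)) ((a + 2) * r ^ (a + 1)) r := by
    simpa [show a + 2 - 1 = a + 1 by ring] using Real.hasDerivAt_rpow_const (p := a + 2) (Or.inl hr)
  refine (hpow.mul ((((hlog.pow 2).const_mul ((a + 2) ^ 2)).add
    (hlog.const_mul (2 * (a + 2)))).add_const 2)).div_const ((a + 2) ^ 3) |>.congr_deriv ?_
  simp only [Pi.add_apply, Pi.pow_apply]
  rw [show r ^ (a + 2) = r ^ (a + 1) * r by rw [← Real.rpow_add_one hr]; ring_nf]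
  field_simp
  ring

theorem intervalIntegrable_log_div_sq_mul_rpow {r₀ a c : ℝ} (hr₀ : 0 < r₀) (hc : 0 < c) :
    IntervalIntegrable (fun r => Real.log (r₀ / r) ^ 2 * r ^ (a + 1)) volume c r₀ := by
  refine ContinuousOn.intervalIntegrable fun r hr => ?_
  have hr : r ≠ 0 := ((lt_min hc hr₀).trans_le hr.1).ne'
  exact (((continuousAt_const.div continuousAt_id hr).log (div_ne_zero hr₀.ne' hr)).pow 2 |>.mul
    (continuousAt_id.rpow_const (Or.inl hr))).continuousWithinAt

theorem integral_log_div_sq_mul_rpow {r₀ a c : ℝ} (hr₀ : 0 < r₀) (ha : a + 2 ≠ 0) (hc : 0 < c) :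
    ∫ r in c..r₀, Real.log (r₀ / r) ^ 2 * r ^ (a + 1) =
      (2 * r₀ ^ (a + 2) - c ^ (a + 2) *
        ((a + 2) ^ 2 * Real.log (r₀ / c) ^ 2 + 2 * (a + 2) * Real.log (r₀ / c) + 2)) /
        (a + 2) ^ 3 := by
  have hne : ∀ r ∈ uIcc c r₀, r ≠ 0 := fun r hr => ((lt_min hc hr₀).trans_le hr.1).ne'
  rw [intervalIntegral.integral_eq_sub_of_hasDerivAt
    (fun r hr => hasDerivAt_log_div_sq_rpow_antideriv hr₀.ne' ha (hne r hr))
    (intervalIntegrable_log_div_sq_mul_rpow hr₀ hc)]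
  simp only [div_self hr₀.ne', Real.log_one]
  ring

namespace Moser

noncomputable def profile (r₀ : ℝ) (n : ℕ) (r : ℝ) : ℝ :=
  if r ≤ r₀ / n then Real.sqrt (Real.log n) / Real.sqrt (2 * π)
  else if r ≤ r₀ then Real.log (r₀ / r) / (Real.sqrt (2 * π) * Real.sqrt (Real.log n))
  else 0

theorem moserFn_eq_profile (r₀ : ℝ) (n : ℕ) (x : EuclideanSpace ℝ (Fin 2)) :
    moserFn r₀ n x = profile r₀ n ‖x‖ := rfl

section Profile

variable {r₀ r : ℝ} {n : ℕ}

theorem profile_sq_of_le (h : r ≤ r₀ / n) : profile r₀ n r ^ 2 = Real.log n / (2 * π) := by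
  rw [profile, if_pos h, div_pow, sq_sqrt (Real.log_natCast_nonneg n),
    sq_sqrt (by positivity)]

theorem profile_sq_of_lt_of_le (h₁ : r₀ / n < r) (h₂ : r ≤ r₀) :
    profile r₀ n r ^ 2 = Real.log (r₀ / r) ^ 2 / (2 * π * Real.log n) := by
  rw [profile, if_neg h₁.not_ge, if_pos h₂, div_pow, mul_pow,
    sq_sqrt (Real.log_natCast_nonneg n), sq_sqrt (by positivity)]

theorem profile_of_lt (hr₀ : 0 ≤ r₀) (h : r₀ < r) : profile r₀ n r = 0 := by
  have hc : r₀ / n ≤ r₀ := by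
    rcases n.eq_zero_or_pos with rfl | hn
    · simpa using hr₀
    · exact div_le_self hr₀ (by exact_mod_cast hn)
  rw [profile, if_neg (hc.trans_lt h).not_ge, if_neg h.not_ge]

end Profile

section Radial

variable {r₀ a : ℝ} {n : ℕ}

theorem mul_rpow_mul_profile_sq_eqOn_inner :
    EqOn (fun y => y * (y ^ a * profile r₀ n y ^ 2))
      (fun y => Real.log n / (2 * π) * y ^ (a + 1)) (Ioo 0 (r₀ / n)) := fun y hy => by
  simp only
  rw [profile_sq_of_le hy.2.le, Real.rpow_add_one hy.1.ne']
  ring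

theorem mul_rpow_mul_profile_sq_eqOn_annulus (hr₀ : 0 ≤ r₀) :
    EqOn (fun y => y * (y ^ a * profile r₀ n y ^ 2))
      (fun y => (2 * π * Real.log n)⁻¹ * (Real.log (r₀ / y) ^ 2 * y ^ (a + 1)))
      (Ioo (r₀ / n) r₀) := fun y hy => by
  have hy0 : y ≠ 0 := ((div_nonneg hr₀ n.cast_nonneg).trans_lt hy.1).ne'
  simp only
  rw [profile_sq_of_lt_of_le hy.1 hy.2.le, Real.rpow_add_one hy0]
  ring

theorem integrableOn_mul_rpow_mul_profile_sq_and_integral (hr₀ : 0 < r₀) (ha : -2 < a)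
    (hn : 0 < n) :
    IntegrableOn (fun y => y * (y ^ a * profile r₀ n y ^ 2)) (Ioi 0) ∧
      2 * π * ∫ y in Ioi 0, y * (y ^ a * profile r₀ n y ^ 2) = moserDelta 1 a r₀ n := by
  set f := fun y => y * (y ^ a * profile r₀ n y ^ 2)
  have hn' : (0 : ℝ) < n := by exact_mod_cast hn
  have hc : 0 < r₀ / n := div_pos hr₀ hn'
  have hcr : r₀ / n ≤ r₀ := div_le_self hr₀.le (by exact_mod_cast hn)
  have h_inner := (intervalIntegral.intervalIntegrable_rpow' (a := 0) (b := r₀ / n)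
    (r := a + 1) (by linarith)).const_mul (Real.log n / (2 * π))
  have h_annulus := (intervalIntegrable_log_div_sq_mul_rpow (a := a) hr₀ hc).const_mul
    (2 * π * Real.log n)⁻¹
  have h_outer : ∀ y ∈ Ioi 0 \ Ioc 0 r₀, f y = 0 := fun y hy => by
    have hy : r₀ < y := not_le.1 fun h => hy.2 ⟨hy.1, h⟩
    simp [f, profile_of_lt hr₀.le hy]
  have h_eq_inner := mul_rpow_mul_profile_sq_eqOn_inner (r₀ := r₀) (a := a) (n := n)
  have h_eq_annulus := mul_rpow_mul_profile_sq_eqOn_annulus (a := a) (n := n) hr₀.le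
  have hf_inner : IntervalIntegrable f volume 0 (r₀ / n) :=
    h_inner.congr_uIoo ((uIoo_of_le hc.le).symm ▸ h_eq_inner).symm
  have hf_annulus : IntervalIntegrable f volume (r₀ / n) r₀ :=
    h_annulus.congr_uIoo ((uIoo_of_le hcr).symm ▸ h_eq_annulus).symm
  have hf : IntegrableOn f (Ioc 0 r₀) :=
    (intervalIntegrable_iff_integrableOn_Ioc_of_le hr₀.le).1 (hf_inner.trans hf_annulus)
  refine ⟨hf.of_forall_sdiff_eq_zero measurableSet_Ioi h_outer, ?_⟩
  rw [setIntegral_eq_of_subset_of_forall_sdiff_eq_zero measurableSet_Ioi Ioc_subset_Ioi_self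
      h_outer, ← intervalIntegral.integral_of_le hr₀.le,
    ← intervalIntegral.integral_add_adjacent_intervals hf_inner hf_annulus,
    intervalIntegral.integral_congr_Ioo_of_le hc.le h_eq_inner,
    intervalIntegral.integral_congr_Ioo_of_le hcr h_eq_annulus,
    intervalIntegral.integral_const_mul, intervalIntegral.integral_const_mul,
    integral_rpow (Or.inl (by linarith)), Real.zero_rpow (by linarith),
    Real.div_rpow hr₀.le hn'.le, moserDelta]
  rw [show a + 1 + 1 = a + 2 by ring, mul_inv]
  field_simp
  ring

end Radial

theorem moserDelta_eq_mul (M₁ a r₀ : ℝ) (n : ℕ) :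
    moserDelta M₁ a r₀ n = M₁ * moserDelta 1 a r₀ n := by
  simp only [moserDelta]
  ring

theorem integrable_and_integral_eq_moserDelta (M₁ : ℝ) {r₀ a : ℝ} {n : ℕ} (hr₀ : 0 < r₀)
    (ha : -2 < a) (hn : 0 < n) :
    Integrable (fun x : EuclideanSpace ℝ (Fin 2) => M₁ * (‖x‖ ^ a * moserFn r₀ n x ^ 2)) ∧
      ∫ x, M₁ * (‖x‖ ^ a * moserFn r₀ n x ^ 2) = moserDelta M₁ a r₀ n := by
  obtain ⟨hint, hval⟩ := integrableOn_mul_rpow_mul_profile_sq_and_integral hr₀ ha hn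
  simp only [moserFn_eq_profile]
  refine ⟨(integrable_fun_norm_iff_integrableOn_mul.2 hint).const_mul M₁, ?_⟩
  rw [integral_const_mul, integral_fun_norm_eq_two_pi_mul (fun r => r ^ a * profile r₀ n r ^ 2),
    hval, ← moserDelta_eq_mul]

theorem mul_profile_sq_le {V : ℝ → ℝ} {M₁ a r₀ r : ℝ} {n : ℕ} (hr₀ : 0 ≤ r₀) (hr₀' : r₀ ≤ 1)
    (hV : ∀ r : ℝ, 0 < r → r ≤ 1 → V r ≤ M₁ * r ^ a) (hr : 0 < r) :
    V r * profile r₀ n r ^ 2 ≤ M₁ * (r ^ a * profile r₀ n r ^ 2) := by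
  rcases le_or_gt r r₀ with h | h
  · rw [← mul_assoc]
    exact mul_le_mul_of_nonneg_right (hV r hr (h.trans hr₀')) (sq_nonneg _)
  · simp [profile_of_lt hr₀ h]

theorem moserDelta_mul_log (M₁ : ℝ) {a r₀ : ℝ} {n : ℕ} (hr₀ : 0 < r₀) (ha : a + 2 ≠ 0)
    (hn : 1 < n) :
    moserDelta M₁ a r₀ n * Real.log n =
      2 * M₁ * r₀ ^ (a + 2) / (a + 2) ^ 3 * (1 - ((a + 2) * Real.log n + 1) / n ^ (a + 2)) := by
  have hn' : (1 : ℝ) < n := by exact_mod_cast hn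
  have hlog : Real.log n ≠ 0 := (Real.log_pos hn').ne'
  have hnpow : (n : ℝ) ^ (a + 2) ≠ 0 := (Real.rpow_pos_of_pos (by linarith) _).ne'
  rw [moserDelta, integral_log_div_sq_mul_rpow hr₀ ha (div_pos hr₀ (by linarith)),
    div_div_cancel₀ hr₀.ne', Real.div_rpow hr₀.le (by linarith)]
  field_simp
  ring

theorem tendsto_moserDelta_mul_log (M₁ : ℝ) {a r₀ : ℝ} (hr₀ : 0 < r₀) (ha : -2 < a) :
    Tendsto (fun n : ℕ => moserDelta M₁ a r₀ n * Real.log n) atTop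
      (nhds (2 * M₁ * r₀ ^ (a + 2) / (a + 2) ^ 3)) := by
  have hb : 0 < a + 2 := by linarith
  have h_log : Tendsto (fun n : ℕ => Real.log n / (n : ℝ) ^ (a + 2)) atTop (nhds 0) :=
    (isLittleO_log_rpow_atTop hb).tendsto_div_nhds_zero.comp tendsto_natCast_atTop_atTop
  have h_inv : Tendsto (fun n : ℕ => ((n : ℝ) ^ (a + 2))⁻¹) atTop (nhds 0) :=
    ((tendsto_rpow_atTop hb).comp tendsto_natCast_atTop_atTop).inv_tendsto_atTop
  have h_err : Tendsto (fun n : ℕ => ((a + 2) * Real.log n + 1) / n ^ (a + 2)) atTop (nhds 0) := by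
    simpa [add_div, mul_div_assoc, one_div] using (h_log.const_mul (a + 2)).add h_inv
  have := (h_err.const_sub 1).const_mul (2 * M₁ * r₀ ^ (a + 2) / (a + 2) ^ 3)
  rw [sub_zero, mul_one] at this
  refine this.congr' ?_
  filter_upwards [eventually_gt_atTop 1] with n hn
  rw [moserDelta_mul_log M₁ hr₀ hb.ne' hn]

end Moser

theorem stmt_14 (V : ℝ → ℝ) (M₁ a₀ r₀ : ℝ) (hM₁ : 0 < M₁) (ha₀ : a₀ > -2)
    (hr₀ : 0 < r₀) (hr₀' : r₀ ≤ 1)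
    (hV : ∀ r : ℝ, 0 < r → r ≤ 1 → V r ≤ M₁ * r ^ a₀) :
    (∀ n : ℕ, 2 ≤ n →
      ∫ x, V ‖x‖ * (moserFn r₀ n x) ^ 2 ≤ moserDelta M₁ a₀ r₀ n) ∧
    Tendsto (fun n : ℕ => moserDelta M₁ a₀ r₀ n * Real.log n) atTop
      (nhds (2 * M₁ * r₀ ^ (a₀ + 2) / (a₀ + 2) ^ 3)) := by
  refine ⟨fun n hn => ?_, Moser.tendsto_moserDelta_mul_log M₁ hr₀ ha₀⟩
  obtain ⟨hint, hval⟩ := Moser.integrable_and_integral_eq_moserDelta M₁ hr₀ ha₀ (n := n) (by omega)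
  rw [← hval]
  refine integral_le_of_ae_le_of_nonneg hint (.of_forall fun x => by positivity) ?_
  filter_upwards [volume.ae_ne 0] with x hx
  exact Moser.mul_profile_sq_le hr₀.le hr₀' hV (norm_pos_iff.2 hx)
end
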